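/- arXiv:1505.03664 — 2 statements merged into one kernel-verified Lean document; each statement's English description precedes it below -/
import Mathlib

section
/- The characteristic polynomial of the matrix M, as a polynomial in λ over ℤ[Y], equals λ⁴ − (16Y + 1)·λ³ − 16Y·λ² + (512Y³ − 64Y²)·λ + 1024Y⁴. -/
open Polynomial Matrix

/-- The indeterminate `Y` of `ℤ[Y]`. -/
noncomputable def Y : Polynomial ℤ := Polynomial.X

/-- The reduced transfer matrix for the genus distribution of doubly hexagonal chains. -/
noncomputable def M : Matrix (Fin 4) (Fin 4) (Polynomial ℤ) :=
  !![1, 2, 4, 8;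
     8*Y, 8*Y, 8*Y, 0;
     2*Y, 4*Y, 0, 0;
     4*Y^2 + Y, 2*Y, 4*Y, 8*Y]

set_option maxHeartbeats 2000000 in
theorem charpoly_M :
    M.charpoly =
      Polynomial.X ^ 4 - Polynomial.C (16 * Y + 1) * Polynomial.X ^ 3
        - Polynomial.C (16 * Y) * Polynomial.X ^ 2
        + Polynomial.C (512 * Y ^ 3 - 64 * Y ^ 2) * Polynomial.X
        + Polynomial.C (1024 * Y ^ 4) := by
  have h : M.charmatrix =
      !![Polynomial.X - Polynomial.C 1, -Polynomial.C 2, -Polynomial.C 4, -Polynomial.C 8;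
         -Polynomial.C (8*Y), Polynomial.X - Polynomial.C (8*Y), -Polynomial.C (8*Y), 0;
         -Polynomial.C (2*Y), -Polynomial.C (4*Y), Polynomial.X, 0;
         -Polynomial.C (4*Y^2+Y), -Polynomial.C (2*Y), -Polynomial.C (4*Y), Polynomial.X - Polynomial.C (8*Y)] := by
    ext i j
    fin_cases i <;> fin_cases j <;>
      simp [charmatrix_apply, M, Y, Matrix.one_apply]
  rw [Matrix.charpoly, h, Matrix.det_succ_row_zero]
  simp only [Fin.sum_univ_succ, Fin.sum_univ_zero, Matrix.det_fin_three,
    Matrix.submatrix_apply, Matrix.of_apply, Matrix.cons_val', Matrix.cons_val_zero,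
    Matrix.cons_val_one, Matrix.head_cons, Matrix.head_fin_const,
    Matrix.cons_val_fin_one, Fin.succAbove, Fin.succ_zero_eq_one]
  norm_num [Fin.ext_iff, Fin.lt_def, Fin.succ, Fin.castSucc, Fin.castAdd, Fin.castLE,
    Matrix.cons_val_two, Matrix.cons_val_three, Matrix.tail_cons, Y, map_ofNat]
  ring
end

section
/- The matrix M satisfies its characteristic polynomial explicitly: M⁴ = (16Y + 1)·M³ + 16Y·M² − (512Y³ − 64Y²)·M − 1024Y⁴·I, where I is the 4×4 identity matrix over ℤ[Y]. -/
open Polynomial Matrix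

/-- The literal value of `M ^ 2`. -/
noncomputable def M2 : Matrix (Fin 4) (Fin 4) (Polynomial ℤ) :=
  !![(1:Polynomial ℤ) + 32*Y + 32*Y^2, (2:Polynomial ℤ) + 48*Y, (4:Polynomial ℤ) + 48*Y, (8:Polynomial ℤ) + 64*Y;
     8*Y + 80*Y^2, 16*Y + 96*Y^2, 32*Y + 64*Y^2, 64*Y;
     2*Y + 32*Y^2, 4*Y + 32*Y^2, 8*Y + 32*Y^2, 16*Y;
     1*Y + 36*Y^2 + 32*Y^3, 2*Y + 56*Y^2, 4*Y + 64*Y^2, 8*Y + 96*Y^2]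

/-- The literal value of `M ^ 3`. -/
noncomputable def M3 : Matrix (Fin 4) (Fin 4) (Polynomial ℤ) :=
  !![(1:Polynomial ℤ) + 64*Y + 608*Y^2 + 256*Y^3, (2:Polynomial ℤ) + 112*Y + 768*Y^2, (4:Polynomial ℤ) + 176*Y + 768*Y^2, (8:Polynomial ℤ) + 320*Y + 768*Y^2;
     8*Y + 336*Y^2 + 1152*Y^3, 16*Y + 544*Y^2 + 1024*Y^3, 32*Y + 704*Y^2 + 768*Y^3, 64*Y + 1152*Y^2;
     2*Y + 96*Y^2 + 384*Y^3, 4*Y + 160*Y^2 + 384*Y^3, 8*Y + 224*Y^2 + 256*Y^3, 16*Y + 384*Y^2;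
     1*Y + 68*Y^2 + 736*Y^3 + 384*Y^4, 2*Y + 120*Y^2 + 960*Y^3, 4*Y + 192*Y^2 + 960*Y^3, 8*Y + 352*Y^2 + 1024*Y^3]

/-- The literal value of `M ^ 4`. -/
noncomputable def M4 : Matrix (Fin 4) (Fin 4) (Polynomial ℤ) :=
  !![(1:Polynomial ℤ) + 96*Y + 2208*Y^2 + 9984*Y^3 + 3072*Y^4, (2:Polynomial ℤ) + 176*Y + 3456*Y^2 + 11264*Y^3, (4:Polynomial ℤ) + 304*Y + 4608*Y^2 + 10240*Y^3, (8:Polynomial ℤ) + 576*Y + 7424*Y^2 + 8192*Y^3;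
     8*Y + 592*Y^2 + 8320*Y^3 + 14336*Y^4, 16*Y + 1056*Y^2 + 11776*Y^3 + 11264*Y^4, 32*Y + 1728*Y^2 + 13568*Y^3 + 8192*Y^4, 64*Y + 3200*Y^2 + 18432*Y^3;
     2*Y + 160*Y^2 + 2560*Y^3 + 5120*Y^4, 4*Y + 288*Y^2 + 3712*Y^3 + 4096*Y^4, 8*Y + 480*Y^2 + 4352*Y^3 + 3072*Y^4, 16*Y + 896*Y^2 + 6144*Y^3;
     1*Y + 100*Y^2 + 2464*Y^3 + 12416*Y^4 + 4096*Y^5, 2*Y + 184*Y^2 + 3904*Y^3 + 14336*Y^4, 4*Y + 320*Y^2 + 5312*Y^3 + 13312*Y^4, 8*Y + 608*Y^2 + 8704*Y^3 + 11264*Y^4]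

set_option maxHeartbeats 1000000 in
lemma hM2 : M * M = M2 := by
  refine Matrix.ext fun i j => ?_
  fin_cases i <;> fin_cases j <;>
    simp [M, M2, Matrix.mul_apply, Fin.sum_univ_four] <;> ring

set_option maxHeartbeats 1000000 in
lemma hM3 : M2 * M = M3 := by
  refine Matrix.ext fun i j => ?_
  fin_cases i <;> fin_cases j <;>
    simp [M, M2, M3, Matrix.mul_apply, Fin.sum_univ_four] <;> ring

set_option maxHeartbeats 1000000 in
lemma hM4 : M3 * M = M4 := by
  refine Matrix.ext fun i j => ?_
  fin_cases i <;> fin_cases j <;>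
    simp [M, M3, M4, Matrix.mul_apply, Fin.sum_univ_four] <;> ring

set_option maxHeartbeats 1000000 in
theorem M_satisfies_charpoly :
    M ^ 4 = (16 * Y + 1) • M ^ 3 + (16 * Y) • M ^ 2
      - (512 * Y ^ 3 - 64 * Y ^ 2) • M
      - (1024 * Y ^ 4) • (1 : Matrix (Fin 4) (Fin 4) (Polynomial ℤ)) := by
  have e2 : M ^ 2 = M2 := by rw [pow_two, hM2]
  have e3 : M ^ 3 = M3 := by rw [pow_succ, e2, hM3]
  have e4 : M ^ 4 = M4 := by rw [pow_succ, e3, hM4]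
  rw [e2, e3, e4]
  refine Matrix.ext fun i j => ?_
  fin_cases i <;> fin_cases j <;>
    simp +decide [M, M2, M3, M4, Matrix.one_apply, Fin.ext_iff] <;> ring
end
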